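/- Let E be a directed graph. Suppose that for every x ∈ E^{≤∞}, every path in E^∞ that is frequently divertable to [x] is shift equivalent to x. Then no cycle in E has an entry. -/

import Mathlib

/-- A directed graph: countable sets of vertices and edges, with range and source
maps. -/
structure DGraph : Type 1 where
  V : Type
  E : Type
  countableV : Countable V
  countableE : Countable E
  r : E → V
  s : E → V

namespace DGraph

/-- `E` is row-finite: every vertex receives only finitely many edges. -/
def RowFinite (G : DGraph) : Prop := ∀ v : G.V, {e : G.E | G.r e = v}.Finite

/-- A source of `E`: a vertex receiving no edges. -/
def IsSource (G : DGraph) (v : G.V) : Prop := ∀ e : G.E, G.r e ≠ v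

end DGraph

/-- A (finite or infinite) path in the directed graph `G`.  `edge i` is the
`(i+1)`-st edge of the path (or `none` beyond the end of the path); once `none`
always `none`, so a path is either a vertex (`rng`, with no edges), a finite path,
or an infinite path.  Edges are composed so that `s(edge i) = r(edge (i+1))`. -/
structure LPath (G : DGraph) where
  rng : G.V
  edge : ℕ → Option G.E
  edge_closed : ∀ i, edge i = none → edge (i + 1) = none
  rng_compat : ∀ e, edge 0 = some e → G.r e = rng
  compat : ∀ i e f, edge i = some e → edge (i + 1) = some f → G.s e = G.r f

namespace LPath

variable {G : DGraph}

/-- The vertex `x(n)` of the path `x` (a junk value, the range, beyond the length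
of the path). -/
def vert (x : LPath G) : ℕ → G.V
  | 0 => x.rng
  | n + 1 =>
    match x.edge n with
    | some e => G.s e
    | none => x.rng

/-- `x` is an infinite path, i.e. a member of `E^∞`. -/
def Infinite (x : LPath G) : Prop := ∀ i, (x.edge i).isSome

/-- `n ≤ |x|`: the first `n` edges of `x` all exist. -/
def LeLen (x : LPath G) (n : ℕ) : Prop := ∀ i, i < n → (x.edge i).isSome

/-- `|x| = n`: `x` is a finite path of length `n`. -/
def LenEq (x : LPath G) (n : ℕ) : Prop := x.edge n = none ∧ x.LeLen n

theorem vert_eq (x : LPath G) (m : ℕ) (e : G.E) (h : x.edge m = some e) :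
    G.r e = x.vert m := by
  cases m with
  | zero => exact x.rng_compat e h
  | succ n =>
    cases hn : x.edge n with
    | none => exact absurd h (by simp [x.edge_closed n hn])
    | some f =>
      have hc := x.compat n f e hn h
      simp only [vert, hn]
      exact hc.symm

/-- The shifted path `σ^m(x)` (meaningful when `m ≤ |x|`). -/
def shift (x : LPath G) (m : ℕ) : LPath G where
  rng := x.vert m
  edge i := x.edge (m + i)
  edge_closed i h := x.edge_closed (m + i) h
  rng_compat e he := x.vert_eq m e he
  compat i e f he hf := x.compat (m + i) e f he hf

/-- `x` is shift equivalent to `y` with lag `n ∈ ℤ`: there are `p, q ∈ ℕ` with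
`p - q = n`, `p ≤ |x|`, `q ≤ |y|` and `σ^p(x) = σ^q(y)`. -/
def ShiftEquivLag (x y : LPath G) (n : ℤ) : Prop :=
  ∃ p q : ℕ, (p : ℤ) - (q : ℤ) = n ∧ x.LeLen p ∧ y.LeLen q ∧ x.shift p = y.shift q

/-- `x` is shift equivalent to `y`. -/
def ShiftEquiv (x y : LPath G) : Prop := ∃ n : ℤ, ShiftEquivLag x y n

/-- `x` belongs to `E^{≤∞}`: it is infinite, or finite with its source a source
of the graph. -/
def Boundary (x : LPath G) : Prop :=
  x.Infinite ∨ ∃ n : ℕ, x.LenEq n ∧ G.IsSource (x.vert n)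

/-- `x` is frequently divertable to `[y]`: for every `n ≤ |x|` there is a path in
`x(n)E^{≤∞}` that is shift equivalent to `y`. -/
def FreqDiv (x y : LPath G) : Prop :=
  ∀ n : ℕ, x.LeLen n → ∃ z : LPath G, z.Boundary ∧ z.rng = x.vert n ∧ ShiftEquiv z y

/-- The segment `x(m, n)` of `x` is a cycle: it is closed (`x(m) = x(n)`) and the
sources `x(i)`, `m < i ≤ n`, of its edges are pairwise distinct. -/
def HasCycleAt (x : LPath G) (m n : ℕ) : Prop :=
  m < n ∧ x.LeLen n ∧ x.vert m = x.vert n ∧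
    ∀ i j, m < i → i ≤ n → m < j → j ≤ n → x.vert i = x.vert j → i = j

/-- `x` contains a cycle. -/
def ContainsCycle (x : LPath G) : Prop := ∃ m n, x.HasCycleAt m n

end LPath

/-- A cycle in `G`: a finite path `α = α_1 ⋯ α_len` (here 0-indexed, and with junk
values of `edge` beyond `len`) of non-zero length with `r(α) = s(α)` and whose edges
have pairwise distinct sources. -/
structure DCycle (G : DGraph) where
  len : ℕ
  len_pos : 0 < len
  edge : ℕ → G.E
  compat : ∀ i, i + 1 < len → G.s (edge i) = G.r (edge (i + 1))
  closed : G.s (edge (len - 1)) = G.r (edge 0)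
  distinct : ∀ i j, i < len → j < len → G.s (edge i) = G.s (edge j) → i = j

namespace DCycle

variable {G : DGraph}

/-- `f` is an entry to the cycle `c`: `r(f) = r(c_i)` and `f ≠ c_i` for some `i`. -/
def IsEntry (c : DCycle G) (f : G.E) : Prop :=
  ∃ i, i < c.len ∧ G.r f = G.r (c.edge i) ∧ f ≠ c.edge i

/-- The edge `f` lies in the cycle `c`. -/
def EdgeMem (c : DCycle G) (f : G.E) : Prop := ∃ i, i < c.len ∧ c.edge i = f

end DCycle

/-! If a cycle `c` had an entry `f`, let `x ∈ E^{≤∞}` be any boundary path starting with `f`.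
The path running around `c` forever passes `r(f)` infinitely often, so it is frequently
divertable to `[x]`, hence shift equivalent to `x`. Thus `x` ends in the cycle and returns to
`r(x)`, say after `N ≥ 1` steps; the periodic path repeating `x_1 ⋯ x_N` is again frequently
divertable to `[x]`, hence shift equivalent to `x` and so to the cycle path. But it uses `f`
infinitely often, while the cycle path never does. -/

open Filter

theorem Filter.frequently_atTop_of_add {P Q : ℕ → Prop} (p q : ℕ)
    (h : ∀ t, P (p + t) → Q (q + t)) (hP : ∃ᶠ n in atTop, P n) : ∃ᶠ n in atTop, Q n := by
  rw [frequently_atTop] at hP ⊢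
  intro n
  obtain ⟨m, hm, hPm⟩ := hP (p + n)
  refine ⟨q + (m - p), by omega, h _ ?_⟩
  rwa [Nat.add_sub_cancel' (by omega)]

attribute [ext] LPath

namespace LPath

variable {G : DGraph}

theorem vert_succ (x : LPath G) {k : ℕ} {e : G.E} (h : x.edge k = some e) :
    x.vert (k + 1) = G.s e := by
  simp [vert, h]

theorem edge_add_eq_none (x : LPath G) {k : ℕ} (h : x.edge k = none) (j : ℕ) :
    x.edge (k + j) = none := by
  induction j with
  | zero => exact h
  | succ j ih => exact x.edge_closed _ ih

theorem vert_shift (x : LPath G) (hx : x.Infinite) (a k : ℕ) :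
    (x.shift a).vert k = x.vert (a + k) := by
  cases k with
  | zero => rfl
  | succ k =>
    obtain ⟨e, he⟩ := Option.isSome_iff_exists.mp (hx (a + k))
    rw [vert_succ _ (show (x.shift a).edge k = some e from he), ← Nat.add_assoc, vert_succ _ he]

theorem ShiftEquiv.refl (x : LPath G) : x.ShiftEquiv x :=
  ⟨0, 0, 0, rfl, fun _ h => absurd h (Nat.not_lt_zero _), fun _ h => absurd h (Nat.not_lt_zero _),
    rfl⟩

theorem Infinite.of_shift_eq {x y : LPath G} {p q : ℕ} (hx : x.Infinite)
    (heq : x.shift p = y.shift q) : y.Infinite := by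
  have hy : ∀ t, (y.edge (q + t)).isSome := fun t =>
    (congrArg (fun z : LPath G => z.edge t) heq) ▸ hx (p + t)
  intro k
  rcases Nat.lt_or_ge k q with hk | hk
  · rw [Option.isSome_iff_ne_none]
    intro hnone
    have hq := y.edge_add_eq_none hnone (q - k)
    rw [Nat.add_sub_cancel' hk.le] at hq
    simpa [hq] using hy 0
  · simpa [Nat.add_sub_cancel' hk] using hy (k - q)

theorem frequently_edge_of_shift_eq {x y : LPath G} {p q : ℕ} (heq : x.shift p = y.shift q)
    {o : Option G.E} (hx : ∃ᶠ n in atTop, x.edge n = o) : ∃ᶠ n in atTop, y.edge n = o :=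
  frequently_atTop_of_add p q (fun t h => (congrArg (fun z : LPath G => z.edge t) heq) ▸ h) hx

theorem frequently_vert_of_shift_eq {x y : LPath G} {p q : ℕ} (hx : x.Infinite)
    (hy : y.Infinite) (heq : x.shift p = y.shift q) {v : G.V}
    (hxv : ∃ᶠ n in atTop, x.vert n = v) : ∃ᶠ n in atTop, y.vert n = v := by
  refine frequently_atTop_of_add p q (fun t h => ?_) hxv
  rwa [← vert_shift _ hx, heq, vert_shift _ hy] at h

def ofSeq (e : ℕ → G.E) (he : ∀ n, G.s (e n) = G.r (e (n + 1))) : LPath G where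
  rng := G.r (e 0)
  edge n := some (e n)
  edge_closed _ h := absurd h (Option.some_ne_none _)
  rng_compat _ h := by rw [Option.some.inj h]
  compat n _ _ ha hb := by rw [← Option.some.inj ha, ← Option.some.inj hb, he]

theorem ofSeq_infinite (e : ℕ → G.E) (he : ∀ n, G.s (e n) = G.r (e (n + 1))) :
    (ofSeq e he).Infinite := fun _ => rfl

theorem ofSeq_vert (e : ℕ → G.E) (he : ∀ n, G.s (e n) = G.r (e (n + 1))) (n : ℕ) :
    (ofSeq e he).vert n = G.r (e n) := by
  cases n with
  | zero => rfl
  | succ n => exact (vert_succ _ (show (ofSeq e he).edge n = some (e n) from rfl)).trans (he n)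

def cons (e : G.E) (x : LPath G) (h : G.s e = x.rng) : LPath G where
  rng := G.r e
  edge
    | 0 => some e
    | k + 1 => x.edge k
  edge_closed
    | 0, h0 => absurd h0 (Option.some_ne_none _)
    | k + 1, hk => x.edge_closed k hk
  rng_compat _ h0 := by rw [Option.some.inj h0]
  compat
    | 0, _, b, ha, hb => by rw [← Option.some.inj ha, h, x.rng_compat b hb]
    | k + 1, a, b, ha, hb => x.compat k a b ha hb

variable {e : G.E} {x : LPath G} {h : G.s e = x.rng}

theorem cons_vert_succ {k : ℕ} (hk : x.LeLen k) : (cons e x h).vert (k + 1) = x.vert k := by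
  cases k with
  | zero => exact h
  | succ k =>
    obtain ⟨f, hf⟩ := Option.isSome_iff_exists.mp (hk k (Nat.lt_succ_self k))
    rw [vert_succ _ (show (cons e x h).edge (k + 1) = some f from hf), vert_succ _ hf]

theorem cons_leLen_succ {k : ℕ} (hk : x.LeLen k) : (cons e x h).LeLen (k + 1) := by
  rintro (_ | i) hi
  · rfl
  · exact hk i (by omega)

theorem cons_shift_succ {k : ℕ} (hk : x.LeLen k) : (cons e x h).shift (k + 1) = x.shift k := by
  refine LPath.ext (cons_vert_succ hk) (funext fun i => ?_)
  show (cons e x h).edge (k + 1 + i) = x.edge (k + i)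
  rw [Nat.add_right_comm]
  rfl

theorem ShiftEquiv.cons {y : LPath G} (hxy : x.ShiftEquiv y) : (cons e x h).ShiftEquiv y := by
  obtain ⟨_, p, q, -, hp, hq, heq⟩ := hxy
  exact ⟨_, p + 1, q, rfl, cons_leLen_succ hp, hq, (cons_shift_succ hp).trans heq⟩

theorem Boundary.cons (hx : x.Boundary) : (cons e x h).Boundary := by
  rcases hx with hinf | ⟨m, ⟨hnone, hle⟩, hsrc⟩
  · left
    rintro (_ | i)
    · rfl
    · exact hinf i
  · exact Or.inr ⟨m + 1, ⟨hnone, cons_leLen_succ hle⟩, (cons_vert_succ hle).symm ▸ hsrc⟩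

theorem exists_boundary_shiftEquiv_of_vert_add_eq {y : LPath G} (hy : y.Infinite)
    (hx : x.Boundary) (d : ℕ) : ∀ n, y.vert (n + d) = x.rng →
      ∃ z : LPath G, z.Boundary ∧ z.rng = y.vert n ∧ z.ShiftEquiv x := by
  induction d with
  | zero => exact fun n hn => ⟨x, hx, hn.symm, ShiftEquiv.refl x⟩
  | succ d ih =>
    intro n hn
    obtain ⟨z, hz, hzr, hzx⟩ := ih (n + 1) (by rwa [Nat.add_right_comm, Nat.add_assoc])
    obtain ⟨f, hf⟩ := Option.isSome_iff_exists.mp (hy n)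
    have hfz : G.s f = z.rng := by rw [hzr, vert_succ _ hf]
    exact ⟨cons f z hfz, hz.cons, y.vert_eq n f hf, hzx.cons⟩

theorem freqDiv_of_frequently_vert_eq {y : LPath G} (hy : y.Infinite) (hx : x.Boundary)
    (hyx : ∃ᶠ n in atTop, y.vert n = x.rng) : y.FreqDiv x := by
  intro n _
  obtain ⟨m, hnm, hm⟩ := frequently_atTop.mp hyx n
  exact exists_boundary_shiftEquiv_of_vert_add_eq hy hx (m - n) n (by rwa [Nat.add_sub_cancel' hnm])

theorem vert_mod_succ (x : LPath G) {N : ℕ} (hN : 0 < N) (hv : x.vert N = x.rng) (k : ℕ) :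
    x.vert ((k + 1) % N) = x.vert (k % N + 1) := by
  rw [← Nat.mod_add_mod k N 1]
  by_cases hk : k % N + 1 < N
  · rw [Nat.mod_eq_of_lt hk]
  · rw [show k % N + 1 = N by have := Nat.mod_lt k hN; omega, Nat.mod_self, hv]
    rfl

def periodize (x : LPath G) (hx : x.Infinite) (N : ℕ) (hN : 0 < N) (hv : x.vert N = x.rng) :
    LPath G where
  rng := x.rng
  edge k := x.edge (k % N)
  edge_closed k hk := absurd hk (Option.isSome_iff_ne_none.mp (hx _))
  rng_compat f hf := x.rng_compat f (by rwa [Nat.zero_mod] at hf)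
  compat k a b ha hb := by
    rw [← vert_succ x ha, ← x.vert_mod_succ hN hv]
    exact (x.vert_eq _ b hb).symm

section Periodize

variable (x : LPath G) (hx : x.Infinite) {N : ℕ} (hN : 0 < N) (hv : x.vert N = x.rng)

theorem periodize_infinite : (x.periodize hx N hN hv).Infinite := fun k => hx (k % N)

theorem periodize_vert (m : ℕ) : (x.periodize hx N hN hv).vert m = x.vert (m % N) := by
  cases m with
  | zero => simp [periodize, vert]
  | succ m =>
    obtain ⟨e, he⟩ := Option.isSome_iff_exists.mp (hx (m % N))
    rw [vert_succ _ (show (x.periodize hx N hN hv).edge m = some e from he), x.vert_mod_succ hN hv,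
      vert_succ _ he]

theorem frequently_periodize_edge_eq :
    ∃ᶠ n in atTop, (x.periodize hx N hN hv).edge n = x.edge 0 :=
  frequently_atTop.mpr fun a => ⟨N * a, Nat.le_mul_of_pos_left a hN,
    show x.edge (N * a % N) = x.edge 0 by rw [Nat.mul_mod_right]⟩

theorem frequently_periodize_vert_eq :
    ∃ᶠ n in atTop, (x.periodize hx N hN hv).vert n = x.rng :=
  frequently_atTop.mpr fun a => ⟨N * a, Nat.le_mul_of_pos_left a hN,
    by rw [periodize_vert, Nat.mul_mod_right]; rfl⟩

end Periodize

end LPath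

namespace DGraph

open Classical in
noncomputable def someEdgeInto (G : DGraph) (v : G.V) : Option G.E :=
  if h : ∃ e, G.r e = v then some h.choose else none

variable {G : DGraph}

theorem r_of_someEdgeInto_eq_some {v : G.V} {e : G.E} (h : G.someEdgeInto v = some e) :
    G.r e = v := by
  unfold someEdgeInto at h
  split_ifs at h with hv
  rw [← Option.some.inj h]
  exact hv.choose_spec

theorem isSource_of_someEdgeInto_eq_none {v : G.V} (h : G.someEdgeInto v = none) :
    G.IsSource v := fun e he => by
  unfold someEdgeInto at h
  rw [dif_pos ⟨e, he⟩] at h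
  exact Option.some_ne_none _ h

noncomputable def maximalPathEdge (G : DGraph) (v : G.V) : ℕ → Option G.E
  | 0 => G.someEdgeInto v
  | n + 1 => (G.maximalPathEdge v n).bind fun e => G.someEdgeInto (G.s e)

noncomputable def maximalPath (G : DGraph) (v : G.V) : LPath G where
  rng := v
  edge := G.maximalPathEdge v
  edge_closed i hi := by simp [maximalPathEdge, hi]
  rng_compat _ he := r_of_someEdgeInto_eq_some he
  compat i a b ha hb := by
    simp only [maximalPathEdge, ha, Option.bind_some] at hb
    exact (r_of_someEdgeInto_eq_some hb).symm

theorem maximalPath_boundary (v : G.V) : (G.maximalPath v).Boundary := by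
  by_cases hinf : (G.maximalPath v).Infinite
  · exact Or.inl hinf
  have hex : ∃ n, G.maximalPathEdge v n = none := by
    simpa [LPath.Infinite, maximalPath] using hinf
  have hfind := Nat.find_spec hex
  have hmin : ∀ j < Nat.find hex, G.maximalPathEdge v j ≠ none := fun j hj => Nat.find_min hex hj
  refine Or.inr ⟨Nat.find hex, ⟨hfind, fun j hj => Option.isSome_iff_ne_none.mpr (hmin j hj)⟩, ?_⟩
  generalize Nat.find hex = n at hfind hmin ⊢
  rcases n with _ | m
  · exact isSource_of_someEdgeInto_eq_none hfind
  · obtain ⟨e, he⟩ := Option.ne_none_iff_exists'.mp (hmin m (Nat.lt_succ_self m))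
    rw [LPath.vert_succ (G.maximalPath v) he]
    simp only [maximalPathEdge, he, Option.bind_some] at hfind
    exact isSource_of_someEdgeInto_eq_none hfind

theorem exists_boundary_edge_zero_eq (f : G.E) : ∃ x : LPath G, x.Boundary ∧ x.edge 0 = some f :=
  ⟨.cons f (G.maximalPath (G.s f)) rfl, (maximalPath_boundary _).cons, rfl⟩

end DGraph

namespace DCycle

variable {G : DGraph} (c : DCycle G)

theorem s_edge_mod_eq (m : ℕ) :
    G.s (c.edge (m % c.len)) = G.r (c.edge ((m + 1) % c.len)) := by
  rw [← Nat.mod_add_mod m c.len 1]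
  by_cases hm : m % c.len + 1 < c.len
  · rw [Nat.mod_eq_of_lt hm]
    exact c.compat _ hm
  · rw [show m % c.len + 1 = c.len by have := Nat.mod_lt m c.len_pos; omega, Nat.mod_self,
      show m % c.len = c.len - 1 by have := Nat.mod_lt m c.len_pos; omega]
    exact c.closed

def toPath : LPath G := LPath.ofSeq (fun n => c.edge (n % c.len)) c.s_edge_mod_eq

theorem toPath_infinite : c.toPath.Infinite := LPath.ofSeq_infinite _ _

theorem frequently_toPath_vert_eq {i : ℕ} (hi : i < c.len) :
    ∃ᶠ n in atTop, c.toPath.vert n = G.r (c.edge i) :=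
  frequently_atTop.mpr fun a => ⟨i + c.len * a, by nlinarith [c.len_pos], by
    rw [toPath, LPath.ofSeq_vert, Nat.add_mul_mod_self_left, Nat.mod_eq_of_lt hi]⟩

theorem not_frequently_toPath_edge_eq {f : G.E} (hf : ¬ c.EdgeMem f) :
    ¬ ∃ᶠ n in atTop, c.toPath.edge n = some f := fun hfreq =>
  let ⟨n, hn⟩ := hfreq.exists
  hf ⟨n % c.len, Nat.mod_lt n c.len_pos, Option.some.inj hn⟩

theorem r_edge_injective {i j : ℕ} (hi : i < c.len) (hj : j < c.len)
    (h : G.r (c.edge i) = G.r (c.edge j)) : i = j := by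
  have hr : ∀ k < c.len, G.r (c.edge k) = G.s (c.edge ((k + (c.len - 1)) % c.len)) := by
    intro k hk
    rw [c.s_edge_mod_eq, show k + (c.len - 1) + 1 = k + c.len by have := c.len_pos; omega,
      Nat.add_mod_right, Nat.mod_eq_of_lt hk]
  rw [hr i hi, hr j hj] at h
  have hij := c.distinct _ _ (Nat.mod_lt _ c.len_pos) (Nat.mod_lt _ c.len_pos) h
  exact Nat.ModEq.eq_of_lt_of_lt (Nat.ModEq.add_right_cancel' _ hij) hi hj

theorem IsEntry.not_edgeMem {f : G.E} (hf : c.IsEntry f) : ¬ c.EdgeMem f := by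
  rintro ⟨j, hj, rfl⟩
  obtain ⟨i, hi, hr, hne⟩ := hf
  exact hne (congrArg c.edge (c.r_edge_injective hj hi hr))

end DCycle

/-- Let `E` be a directed graph such that for every `x ∈ E^{≤∞}`, every path in `E^∞`
that is frequently divertable to `[x]` is shift equivalent to `x`.  Then no cycle in
`E` has an entry. -/
theorem stmt13 (G : DGraph)
    (h : ∀ x : LPath G, x.Boundary → ∀ y : LPath G, y.Infinite →
      LPath.FreqDiv y x → LPath.ShiftEquiv y x) :
    ∀ c : DCycle G, ¬ ∃ f : G.E, c.IsEntry f := by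
  rintro c ⟨f, hf⟩
  have ⟨i, hi, hfi, _⟩ := hf
  obtain ⟨x, hxB, hx0⟩ := DGraph.exists_boundary_edge_zero_eq f
  have hcx : ∃ᶠ n in atTop, c.toPath.vert n = x.rng := by
    rw [← x.rng_compat f hx0, hfi]
    exact c.frequently_toPath_vert_eq hi
  have hc := c.toPath_infinite
  obtain ⟨-, p, q, -, -, -, hcycle⟩ :=
    h x hxB c.toPath hc (LPath.freqDiv_of_frequently_vert_eq hc hxB hcx)
  have hx : x.Infinite := hc.of_shift_eq hcycle
  have hxx := LPath.frequently_vert_of_shift_eq hc hx hcycle hcx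
  obtain ⟨N, hvN, hN⟩ := (hxx.and_eventually (eventually_gt_atTop 0)).exists
  have hz := x.periodize_infinite hx hN hvN
  have hzv := x.frequently_periodize_vert_eq hx hN hvN
  obtain ⟨-, a, b, -, -, -, hzx⟩ := h x hxB _ hz (LPath.freqDiv_of_frequently_vert_eq hz hxB hzv)
  have hfz := hx0 ▸ x.frequently_periodize_edge_eq hx hN hvN
  exact c.not_frequently_toPath_edge_eq hf.not_edgeMem
    (LPath.frequently_edge_of_shift_eq hcycle.symm (LPath.frequently_edge_of_shift_eq hzx hfz))
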